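/- For any ℋ-measurable real random variables φ, c, and K such that all displayed products are integrable, one has almost surely E[e^{−Aφ}·(Y − e^{c + Aφ})·K·(A − p) | ℋ] = K·( e^{−φ}·E[YA | ℋ]·(1 − p) − E[Y(1 − A) | ℋ]·p ); in particular the right-hand side equals K·p·(1−p)·( e^{−φ}·E[YA | ℋ]/p − E[Y(1−A) | ℋ]/(1−p) ), and it does not depend on the nuisance term c. -/

import Mathlib

open MeasureTheory Real

/-- conditional expectation of the estimating-function summand.
Let `(Ω, ℱ, P)` be a probability space, `ℋ ⊆ ℱ` a sub-σ-algebra, `A` a `{0,1}`-valued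
measurable treatment indicator with `p := E[A | ℋ]` satisfying `0 < p < 1` a.s., and `Y`
a nonnegative integrable outcome.  For any ℋ-measurable `φ, c, K` with the displayed
products integrable, a.s.
`E[e^{−Aφ}·(Y − e^{c+Aφ})·K·(A − p) | ℋ]
  = K·(e^{−φ}·E[YA | ℋ]·(1 − p) − E[Y(1−A) | ℋ]·p)`,
and the right-hand side equals
`K·p·(1−p)·(e^{−φ}·E[YA | ℋ]/p − E[Y(1−A) | ℋ]/(1−p))`; it does not depend on `c`. -/
theorem conditional_estimating_function_identity
    {Ω : Type*} (m : MeasurableSpace Ω) {m0 : MeasurableSpace Ω} (μ : Measure Ω) [IsProbabilityMeasure μ]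
    (hm : m ≤ m0)
    (A : Ω → ℝ) (hA : Measurable A) (hA01 : ∀ ω, A ω = 0 ∨ A ω = 1)
    (hp : ∀ᵐ ω ∂μ, 0 < (μ[A|m]) ω ∧ (μ[A|m]) ω < 1)
    (Y : Ω → ℝ) (hY0 : ∀ ω, 0 ≤ Y ω) (hYint : Integrable Y μ)
    (φ c K : Ω → ℝ)
    (hφ : StronglyMeasurable[m] φ) (hc : StronglyMeasurable[m] c)
    (hK : StronglyMeasurable[m] K)
    (hint : Integrable (fun ω => exp (-(A ω * φ ω)) *
      (Y ω - exp (c ω + A ω * φ ω)) * K ω * (A ω - (μ[A|m]) ω)) μ)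
    (hint1 : Integrable (fun ω => exp (-(φ ω)) * Y ω * A ω * K ω) μ)
    (hint2 : Integrable (fun ω => Y ω * (1 - A ω) * K ω) μ)
    (hint3 : Integrable (fun ω => exp (c ω) * K ω * (A ω - (μ[A|m]) ω)) μ) :
    (μ[(fun ω => exp (-(A ω * φ ω)) * (Y ω - exp (c ω + A ω * φ ω)) * K ω *
        (A ω - (μ[A|m]) ω))|m] =ᵐ[μ]
      fun ω => K ω * (exp (-(φ ω)) * (μ[(fun ω' => Y ω' * A ω')|m]) ω * (1 - (μ[A|m]) ω)
        - (μ[(fun ω' => Y ω' * (1 - A ω'))|m]) ω * (μ[A|m]) ω)) ∧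
    ((fun ω => K ω * (exp (-(φ ω)) * (μ[(fun ω' => Y ω' * A ω')|m]) ω * (1 - (μ[A|m]) ω)
        - (μ[(fun ω' => Y ω' * (1 - A ω'))|m]) ω * (μ[A|m]) ω)) =ᵐ[μ]
      fun ω => K ω * (μ[A|m]) ω * (1 - (μ[A|m]) ω) *
        (exp (-(φ ω)) * (μ[(fun ω' => Y ω' * A ω')|m]) ω / (μ[A|m]) ω
          - (μ[(fun ω' => Y ω' * (1 - A ω'))|m]) ω / (1 - (μ[A|m]) ω))) := by
  set p : Ω → ℝ := μ[A|m] with hpdef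
  have hpm : StronglyMeasurable[m] p := stronglyMeasurable_condExp
  have hAsm : AEStronglyMeasurable[m0] A μ := hA.stronglyMeasurable.aestronglyMeasurable
  have hAint : Integrable A μ := by
    apply Integrable.mono' (integrable_const (1:ℝ)) hAsm
    filter_upwards with ω
    rcases hA01 ω with h | h <;> simp [h]
  -- a.e. bounds on p
  have hpb : ∀ᵐ ω ∂μ, ‖(1 : ℝ) - p ω‖ ≤ 1 ∧ ‖p ω‖ ≤ 1 := by
    filter_upwards [hp] with ω ⟨h0, h1⟩
    constructor <;> rw [Real.norm_eq_abs, abs_le] <;> constructor <;> linarith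
  -- integrability of YA and Y(1-A)
  have hYA : Integrable (fun ω => Y ω * A ω) μ := by
    apply Integrable.mono' hYint ((hYint.1).mul hAsm)
    filter_upwards with ω
    rcases hA01 ω with h | h <;> simp [h, norm_mul, abs_of_nonneg (hY0 ω), hY0 ω]
  have hY1A : Integrable (fun ω => Y ω * (1 - A ω)) μ := by
    apply Integrable.mono' hYint (hYint.1.mul (aestronglyMeasurable_const.sub hAsm))
    filter_upwards with ω
    rcases hA01 ω with h | h <;> simp [h, abs_of_nonneg (hY0 ω), hY0 ω]
  -- the three pieces
  set g1 : Ω → ℝ := fun ω => (exp (-(φ ω)) * (1 - p ω) * K ω) * (Y ω * A ω) with hg1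
  set g2 : Ω → ℝ := fun ω => (-(p ω) * K ω) * (Y ω * (1 - A ω)) with hg2
  set g3 : Ω → ℝ := fun ω => -(exp (c ω) * K ω * (A ω - p ω)) with hg3
  have hg1int : Integrable g1 μ := by
    have : Integrable (fun ω => (1 - p ω) * (exp (-(φ ω)) * Y ω * A ω * K ω)) μ :=
      hint1.bdd_mul (aestronglyMeasurable_const.sub
        (hpm.mono hm).aestronglyMeasurable) (hpb.mono fun ω h => h.1)
    exact this.congr (by filter_upwards with ω; ring)
  have hg2int : Integrable g2 μ := by
    have : Integrable (fun ω => (-(p ω)) * (Y ω * (1 - A ω) * K ω)) μ :=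
      hint2.bdd_mul ((hpm.mono hm).aestronglyMeasurable.neg)
        (hpb.mono fun ω h => by simpa using h.2)
    exact this.congr (by filter_upwards with ω; ring)
  have hg3int : Integrable g3 μ := hint3.neg
  -- pointwise decomposition
  have hdecomp : ∀ ω, exp (-(A ω * φ ω)) * (Y ω - exp (c ω + A ω * φ ω)) * K ω *
      (A ω - p ω) = g1 ω + g2 ω + g3 ω := by
    intro ω
    have he := Real.exp_ne_zero (φ ω)
    rcases hA01 ω with h | h <;>
      simp only [hg1, hg2, hg3, h] <;>
      rw [Real.exp_add] <;> simp only [Real.exp_neg, zero_mul, Real.exp_zero] <;> field_simp <;> ring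
  -- conditional expectations of pieces
  have hce1 : μ[g1|m] =ᵐ[μ] fun ω =>
      (exp (-(φ ω)) * (1 - p ω) * K ω) * (μ[(fun ω' => Y ω' * A ω')|m]) ω := by
    have := condExp_mul_of_stronglyMeasurable_left (m := m) (μ := μ)
      (f := fun ω => exp (-(φ ω)) * (1 - p ω) * K ω) (g := fun ω => Y ω * A ω)
      ((((Real.continuous_exp.comp_stronglyMeasurable hφ.neg)).mul (stronglyMeasurable_const.sub hpm)).mul hK) hg1int hYA
    exact this
  have hce2 : μ[g2|m] =ᵐ[μ] fun ω =>
      (-(p ω) * K ω) * (μ[(fun ω' => Y ω' * (1 - A ω'))|m]) ω := by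
    exact condExp_mul_of_stronglyMeasurable_left (m := m) (μ := μ)
      (f := fun ω => -(p ω) * K ω) (g := fun ω => Y ω * (1 - A ω))
      ((hpm.neg).mul hK) hg2int hY1A
  have hce3 : μ[g3|m] =ᵐ[μ] fun _ => (0 : ℝ) := by
    have h1 : μ[g3|m] =ᵐ[μ] fun ω => (-(exp (c ω) * K ω)) * (μ[(fun ω' => A ω' - p ω')|m]) ω := by
      have := condExp_mul_of_stronglyMeasurable_left (m := m) (μ := μ)
        (f := fun ω => -(exp (c ω) * K ω)) (g := fun ω => A ω - p ω)
        (((Real.continuous_exp.comp_stronglyMeasurable hc).mul hK).neg)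
        (hg3int.congr (by filter_upwards with ω; simp [hg3]; try ring))
        (hAint.sub integrable_condExp)
      refine Filter.EventuallyEq.trans ?_ this
      exact condExp_congr_ae (by filter_upwards with ω; simp [hg3, Pi.mul_apply]; try ring)
    have h2 : μ[(fun ω' => A ω' - p ω')|m] =ᵐ[μ] fun _ => (0:ℝ) := by
      have := condExp_sub (μ := μ) (m := m) (f := A) (g := p) hAint (integrable_condExp (m := m))
      refine this.trans ?_
      have : μ[p|m] =ᵐ[μ] p := condExp_condExp_of_le le_rfl hm
      filter_upwards [this] with ω hω
      simp [hω]; exact sub_self _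
    refine h1.trans ?_
    filter_upwards [h2] with ω hω
    simp [hω]
  constructor
  · have heq : μ[(fun ω => exp (-(A ω * φ ω)) * (Y ω - exp (c ω + A ω * φ ω)) * K ω *
        (A ω - p ω))|m] =ᵐ[μ] μ[fun ω => g1 ω + g2 ω + g3 ω|m] :=
      condExp_congr_ae (by filter_upwards with ω; exact hdecomp ω)
    have hadd : μ[fun ω => g1 ω + g2 ω + g3 ω|m] =ᵐ[μ]
        fun ω => (μ[g1|m]) ω + (μ[g2|m]) ω + (μ[g3|m]) ω := by
      have h12 := condExp_add (μ := μ) (m := m) (hg1int.add hg2int) hg3int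
      have h1 := condExp_add (μ := μ) (m := m) hg1int hg2int
      have hre : (fun ω => g1 ω + g2 ω + g3 ω) = g1 + g2 + g3 := rfl
      rw [hre]
      filter_upwards [h12, h1] with ω hω h1ω
      simp only [Pi.add_apply] at *
      rw [hω, h1ω]
    refine (heq.trans hadd).trans ?_
    filter_upwards [hce1, hce2, hce3] with ω h1 h2 h3
    rw [h1, h2, h3]
    ring
  · filter_upwards [hp] with ω ⟨h0, h1⟩
    have hne : p ω ≠ 0 := ne_of_gt h0
    have hne1 : 1 - p ω ≠ 0 := by linarith
    field_simp
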